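/- Let {aₙ} be a sequence of nonnegative reals and a ≥ 0 with (aₙ^{p-1} - a^{p-1})(aₙ - a) → 0 as n → ∞, where p > 1. Then aₙ → a. -/

import Mathlib

/-!
For a strictly increasing `f` on an interval `s ∋ L`, the quantity `(f x - f L) * (x - L)` is
positive for `x ≠ L` and grows as `x` moves away from `L`. So once it is smaller than its value at
a point `b ≠ L`, the point `x` lies strictly on the same side of `b` as `L`. Applied with
`f = t ↦ t ^ (p - 1)` on `[0, ∞)`, this squeezes `a n` into every neighbourhood of `L`.
-/

open Filter Set Topology

section StrictMonoOn

variable {s : Set ℝ} {f : ℝ → ℝ} {L : ℝ}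

lemma StrictMonoOn.sub_mul_sub_pos (hf : StrictMonoOn f s) (hL : L ∈ s) {b : ℝ} (hb : b ∈ s)
    (hbL : b ≠ L) : 0 < (f b - f L) * (b - L) := by
  rcases hbL.lt_or_gt with hlt | hgt
  · exact mul_pos_of_neg_of_neg (sub_neg.2 (hf hb hL hlt)) (sub_neg.2 hlt)
  · exact mul_pos (sub_pos.2 (hf hL hb hgt)) (sub_pos.2 hgt)

lemma MonotoneOn.sub_mul_sub_le_of_mem_uIcc (hf : MonotoneOn f s) (hs : s.OrdConnected)
    (hL : L ∈ s) {x b : ℝ} (hx : x ∈ s) (hb : b ∈ uIcc L x) :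
    (f b - f L) * (b - L) ≤ (f x - f L) * (x - L) := by
  have hbs : b ∈ s := hs.uIcc_subset hL hx hb
  rcases mem_uIcc.1 hb with ⟨hLb, hbx⟩ | ⟨hxb, hbL⟩
  · exact mul_le_mul (sub_le_sub_right (hf hbs hx hbx) _) (sub_le_sub_right hbx _)
      (sub_nonneg.2 hLb) (sub_nonneg.2 (hf hL hx (hLb.trans hbx)))
  · rw [← neg_mul_neg, ← neg_mul_neg (f x - f L), neg_sub, neg_sub, neg_sub, neg_sub]
    exact mul_le_mul (sub_le_sub_left (hf hx hbs hxb) _) (sub_le_sub_left hxb _)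
      (sub_nonneg.2 hbL) (sub_nonneg.2 (hf hx hL (hxb.trans hbL)))

variable {ι : Type*} {l : Filter ι} {a : ι → ℝ}

lemma StrictMonoOn.eventually_notMem_uIcc_of_tendsto_sub_mul_sub (hf : StrictMonoOn f s)
    (hs : s.OrdConnected) (hL : L ∈ s) (ha : ∀ i, a i ∈ s)
    (h : Tendsto (fun i => (f (a i) - f L) * (a i - L)) l (𝓝 0)) (b : ℝ) (hbL : b ≠ L) :
    ∀ᶠ i in l, b ∉ uIcc L (a i) := by
  by_cases hb : b ∈ s
  · filter_upwards [h.eventually (gt_mem_nhds (hf.sub_mul_sub_pos hL hb hbL))] with i hi hbi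
    exact (hf.monotoneOn.sub_mul_sub_le_of_mem_uIcc hs hL (ha i) hbi).not_gt hi
  · exact Eventually.of_forall fun i hbi => hb (hs.uIcc_subset hL (ha i) hbi)

theorem StrictMonoOn.tendsto_of_tendsto_sub_mul_sub (hf : StrictMonoOn f s)
    (hs : s.OrdConnected) (hL : L ∈ s) (ha : ∀ i, a i ∈ s)
    (h : Tendsto (fun i => (f (a i) - f L) * (a i - L)) l (𝓝 0)) : Tendsto a l (𝓝 L) := by
  have away := hf.eventually_notMem_uIcc_of_tendsto_sub_mul_sub hs hL ha h
  refine tendsto_order.2 ⟨fun b hb => ?_, fun b hb => ?_⟩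
  · filter_upwards [away b hb.ne] with i hi
    by_contra! hab
    exact hi (mem_uIcc.2 (Or.inr ⟨hab, hb.le⟩))
  · filter_upwards [away b hb.ne'] with i hi
    by_contra! hab
    exact hi (mem_uIcc.2 (Or.inl ⟨hb.le, hab⟩))

end StrictMonoOn

theorem stmt4 (p : ℝ) (hp : 1 < p) (a : ℕ → ℝ) (ha : ∀ n, 0 ≤ a n) (L : ℝ) (hL : 0 ≤ L)
    (h : Tendsto (fun n => ((a n) ^ (p - 1) - L ^ (p - 1)) * (a n - L)) atTop (nhds 0)) :
    Tendsto a atTop (nhds L) :=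
  (Real.strictMonoOn_rpow_Ici_of_exponent_pos (sub_pos.2 hp)).tendsto_of_tendsto_sub_mul_sub
    ordConnected_Ici hL ha h
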